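/- arXiv:2103.05816 — 3 statements merged into one kernel-verified Lean document; each statement's English description precedes it below -/
import Mathlib

section
/- If G is a graph containing a triangle, and G has a proper coloring using χ(G) colors in which at least one color class has size at least 3, then B(G) ≥ 4. -/
open Finset

variable {V : Type*}

/-- A proper coloring given as a function to ℕ. -/
def IsProperColoring (G : SimpleGraph V) (c : V → ℕ) : Prop :=
  ∀ ⦃u v⦄, G.Adj u v → c u ≠ c v

variable [Fintype V] [DecidableEq V]

/-- Two colorings use every color the same number of times. -/
def SameColorCounts (c c' : V → ℕ) : Prop :=
  ∀ k : ℕ, (univ.filter fun v => c v = k).card = (univ.filter fun v => c' v = k).card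

/-- The number of vertices on which two colorings differ. -/
def recolorCount (c c' : V → ℕ) : ℕ := (univ.filter fun v => c v ≠ c' v).card

/-- The ℕ-valued chromatic number. -/
noncomputable def chromNum (G : SimpleGraph V) : ℕ := G.chromaticNumber.toNat

/-- A proper coloring of `G` using exactly `χ(G)` colors. -/
noncomputable def IsOptimalColoring (G : SimpleGraph V) (f : V → ℕ) : Prop :=
  IsProperColoring G f ∧ (univ.image f).card = chromNum G

/-- The villainy of a coloring `c`: the least number of vertices that must be
recolored to obtain a proper coloring using each color as often as `c` does. -/
noncomputable def colVillainy (G : SimpleGraph V) (c : V → ℕ) : ℕ :=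
  sInf {n | ∃ c', IsProperColoring G c' ∧ SameColorCounts c c' ∧ recolorCount c c' = n}

/-- `c` is a permutation of the coloring `f`. -/
def IsPermutationOf (c f : V → ℕ) : Prop := ∃ σ : Equiv.Perm V, c = f ∘ σ

/-- The villainy of `G`: the maximum villainy over all permutations of optimal
proper colorings of `G`. -/
noncomputable def villainy (G : SimpleGraph V) : ℕ :=
  sSup {n | ∃ f c, IsOptimalColoring G f ∧ IsPermutationOf c f ∧ colVillainy G c = n}

/-! A triangle whose three vertices all get colour `k` forces, in any balanced proper recolouring,
at least two of them off colour `k`; since colour counts are preserved, at least two other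
vertices must be moved onto colour `k`, for four changes in total. Such a colouring is obtained
from an optimal one by permuting three vertices of a colour class of size `≥ 3` onto the
triangle. -/

theorem Finset.exists_perm_forall_mem_of_card_le {A S : Finset V} (h : #A ≤ #S) :
    ∃ σ : Equiv.Perm V, ∀ v ∈ A, σ v ∈ S := by
  obtain ⟨T, hTS, hT⟩ := exists_subset_card_eq h
  let e : {v // v ∈ A} ≃ {v // v ∈ T} := equivOfCardEq hT.symm
  exact ⟨e.extendSubtype, fun v hv => hTS (e.extendSubtype_mem v hv)⟩

namespace SameColorCounts

omit [DecidableEq V] in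
theorem comp_perm (f : V → ℕ) (σ : Equiv.Perm V) : SameColorCounts (f ∘ σ) f := fun k =>
  card_nbij' σ σ.symm (fun v hv => by simpa using hv) (fun v hv => by simpa using hv)
    (fun v _ => σ.symm_apply_apply v) (fun v _ => σ.apply_symm_apply v)

omit [DecidableEq V] in
theorem of_isPermutationOf {c f : V → ℕ} (h : IsPermutationOf c f) : SameColorCounts c f := by
  obtain ⟨σ, rfl⟩ := h
  exact comp_perm f σ

omit [DecidableEq V] in
theorem card_leave_eq_card_enter {c c' : V → ℕ} (h : SameColorCounts c c') (k : ℕ) :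
    #{v | c v = k ∧ c' v ≠ k} = #{v | c' v = k ∧ c v ≠ k} := by
  have hsplit : ∀ x y : V → ℕ,
      #{v | x v = k} = #{v | x v = k ∧ y v = k} + #{v | x v = k ∧ y v ≠ k} := fun x y => by
    rw [← filter_filter, ← filter_filter, card_filter_add_card_filter_not]
  have hboth : #{v | c v = k ∧ c' v = k} = #{v | c' v = k ∧ c v = k} := by
    simp only [and_comm]
  have hcount := h k
  have hc := hsplit c c'
  have hc' := hsplit c' c
  omega

theorem two_mul_card_leave_le_recolorCount {c c' : V → ℕ} (h : SameColorCounts c c') (k : ℕ) :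
    2 * #{v | c v = k ∧ c' v ≠ k} ≤ recolorCount c c' := by
  set leave : Finset V := {v | c v = k ∧ c' v ≠ k}
  set enter : Finset V := {v | c' v = k ∧ c v ≠ k}
  have hdisj : Disjoint leave enter := disjoint_filter.2 fun v _ hv hv' => hv'.2 hv.1
  have hsub : leave ∪ enter ⊆ ({v | c v ≠ c' v} : Finset V) := by
    intro v
    simp only [leave, enter, mem_union, mem_filter, mem_univ, true_and]
    rintro (⟨hc, hc'⟩ | ⟨hc', hc⟩) <;> omega
  have henter : #enter = #leave := (h.card_leave_eq_card_enter k).symm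
  have hcard := card_le_card hsub
  rw [card_union_of_disjoint hdisj] at hcard
  unfold recolorCount
  omega

end SameColorCounts

omit [DecidableEq V] in
/-- A proper colouring uses each colour at most once on a clique. -/
theorem SimpleGraph.IsClique.card_sub_one_le_card_leave {G : SimpleGraph V} {s : Finset V}
    (hs : G.IsClique (s : Set V)) {c c' : V → ℕ} (hc' : IsProperColoring G c') {k : ℕ}
    (hck : ∀ v ∈ s, c v = k) : #s - 1 ≤ #{v | c v = k ∧ c' v ≠ k} := by
  have hstay : #{v ∈ s | c' v = k} ≤ 1 := card_le_one.2 fun u hu v hv => by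
    by_contra huv
    exact hc' (hs (mem_filter.1 hu).1 (mem_filter.1 hv).1 huv)
      ((mem_filter.1 hu).2.trans (mem_filter.1 hv).2.symm)
  have hleave : #{v ∈ s | c' v ≠ k} ≤ #{v | c v = k ∧ c' v ≠ k} :=
    card_le_card fun v hv => by
      simp only [mem_filter, mem_univ, true_and] at hv ⊢
      exact ⟨hck v hv.1, hv.2⟩
  have : #{v ∈ s | c' v = k} + #{v ∈ s | c' v ≠ k} = #s := card_filter_add_card_filter_not _
  omega

omit [DecidableEq V] in
theorem colVillainy_le_villainy (G : SimpleGraph V) {f c : V → ℕ} (hf : IsOptimalColoring G f)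
    (hc : IsPermutationOf c f) : colVillainy G c ≤ villainy G := by
  refine le_csSup ⟨Fintype.card V, ?_⟩ ⟨f, c, hf, hc, rfl⟩
  rintro _ ⟨f, c, hf, hc, rfl⟩
  calc colVillainy G c ≤ recolorCount c f :=
        Nat.sInf_le ⟨f, hf.1, SameColorCounts.of_isPermutationOf hc, rfl⟩
    _ ≤ Fintype.card V := card_le_univ _

theorem SimpleGraph.IsNClique.two_mul_le_colVillainy {G : SimpleGraph V} {n : ℕ} {s : Finset V}
    (hs : G.IsNClique n s) {f c : V → ℕ} (hf : IsProperColoring G f) (hc : IsPermutationOf c f)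
    {k : ℕ} (hck : ∀ v ∈ s, c v = k) : 2 * (n - 1) ≤ colVillainy G c := by
  refine le_csInf ⟨_, f, hf, SameColorCounts.of_isPermutationOf hc, rfl⟩ ?_
  rintro _ ⟨c', hc', hcount, rfl⟩
  have hleave := hs.isClique.card_sub_one_le_card_leave hc' hck
  rw [hs.card_eq] at hleave
  have := hcount.two_mul_card_leave_le_recolorCount k
  omega

theorem villainy_ge_four_of_triangle (G : SimpleGraph V) (a b c : V)
    (hab : G.Adj a b) (hbc : G.Adj b c) (hac : G.Adj a c)
    (f : V → ℕ) (hf : IsOptimalColoring G f)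
    (k : ℕ) (hk : 3 ≤ (univ.filter fun v => f v = k).card) :
    4 ≤ villainy G := by
  have htri : G.IsNClique 3 {a, b, c} := SimpleGraph.is3Clique_triple_iff.2 ⟨hab, hac, hbc⟩
  obtain ⟨σ, hσ⟩ := exists_perm_forall_mem_of_card_le (htri.card_eq.trans_le hk)
  have hperm : IsPermutationOf (f ∘ σ) f := ⟨σ, rfl⟩
  calc 4 = 2 * (3 - 1) := rfl
    _ ≤ colVillainy G (f ∘ σ) :=
        htri.two_mul_le_colVillainy hf.1 hperm fun v hv => (mem_filter.1 (hσ v hv)).2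
    _ ≤ villainy G := colVillainy_le_villainy G hf hperm
end

section
/- Let G be a graph containing a triangle one of whose vertices has degree at least 3 in G. If G has a proper coloring using χ(G) colors in which at least two color classes have size at least 2, then B(G) ≥ 3. -/
/-!
Let `x` be a neighbour of `v` other than `u, w`, and permute the optimal coloring so that `u, w`
get color `k₁` and `v, x` get color `k₂`. The edges `uw` and `vx` are then monochromatic, so a
proper recoloring with the same color counts changes some `p ∈ {u, w}` and some `q ∈ {v, x}`.
If nothing else changes, equal color counts force `p` and `q` to swap colors; then either `v`
clashes with the vertex of `{u, w}` other than `p`, or `p` clashes with `v`.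
-/

open Finset

variable {V : Type*}

variable [Fintype V] [DecidableEq V]

theorem vec4_injective {α : Type*} {a b c d : α} (hab : a ≠ b) (hac : a ≠ c) (had : a ≠ d)
    (hbc : b ≠ c) (hbd : b ≠ d) (hcd : c ≠ d) : Function.Injective ![a, b, c, d] := by
  intro i j
  fin_cases i <;> fin_cases j <;> simp [hab, hac, had, hbc, hbd, hcd, hab.symm, hac.symm,
    had.symm, hbc.symm, hbd.symm, hcd.symm]

theorem SimpleGraph.exists_adj_ne_ne_of_three_le_degree {α : Type*} {G : SimpleGraph α} {v : α}
    [Fintype (G.neighborSet v)] (h : 3 ≤ G.degree v) (u w : α) :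
    ∃ x, G.Adj v x ∧ x ≠ u ∧ x ≠ w := by
  classical
  have hpair : #({u, w} : Finset α) ≤ 2 := card_le_two
  have hsdiff := le_card_sdiff {u, w} (G.neighborFinset v)
  rw [G.card_neighborFinset_eq_degree] at hsdiff
  obtain ⟨x, hx⟩ := card_pos.mp (by omega : 0 < #(G.neighborFinset v \ {u, w}))
  simp only [mem_sdiff, SimpleGraph.mem_neighborFinset, mem_insert, mem_singleton, not_or] at hx
  exact ⟨x, hx.1, hx.2⟩

section

variable {α : Type*} [Fintype α]

theorem SameColorCounts.symm {c c' : α → ℕ} (h : SameColorCounts c c') : SameColorCounts c' c :=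
  fun k => (h k).symm

theorem sameColorCounts_comp_perm (f : α → ℕ) (σ : Equiv.Perm α) : SameColorCounts (f ∘ σ) f :=
  fun k => card_bij (fun z _ => σ z) (by simp) (fun _ _ _ _ h => σ.injective h)
    (fun z hz => ⟨σ.symm z, by simpa using hz, by simp⟩)

/-- The color class `c p` loses `p`, so it must gain some recolored vertex. -/
theorem SameColorCounts.exists_recolored_to {c c' : α → ℕ} (h : SameColorCounts c c') {p : α}
    (hp : c p ≠ c' p) : ∃ q, c q ≠ c' q ∧ c' q = c p := by
  classical
  by_contra! hnone
  have hsub : univ.filter (fun z => c' z = c p) ⊆ (univ.filter fun z => c z = c p).erase p := by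
    intro z hz
    simp only [mem_filter, mem_univ, true_and, mem_erase] at hz ⊢
    have hcz : c z = c' z := not_not.mp fun hne => hnone z hne hz
    exact ⟨by rintro rfl; exact hp hz.symm, hcz.trans hz⟩
  have hle := card_le_card hsub
  rw [card_erase_of_mem (by simp), ← h] at hle
  have hpos : 0 < #{z | c z = c p} := card_pos.mpr ⟨p, by simp⟩
  omega

theorem SameColorCounts.apply_eq_of_recolored_subset_pair {c c' : α → ℕ}
    (h : SameColorCounts c c') {p q : α} (hpq : ∀ z, c z ≠ c' z → z = p ∨ z = q)
    (hp : c p ≠ c' p) : c' q = c p := by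
  obtain ⟨r, hr, hr'⟩ := h.exists_recolored_to hp
  obtain rfl | rfl := hpq r hr
  · exact absurd hr' hp.symm
  · exact hr'

theorem three_le_recolorCount_of_triangle {G : SimpleGraph α} {c c' : α → ℕ}
    (hc' : IsProperColoring G c') (hcc' : SameColorCounts c c') {u v w x : α}
    (huv : G.Adj u v) (hvw : G.Adj v w) (huw : G.Adj u w) (hvx : G.Adj v x)
    (hcuw : c u = c w) (hcvx : c v = c x) (hcuv : c u ≠ c v) :
    3 ≤ recolorCount c c' := by
  by_contra! hlt
  have recolored_of_adj : ∀ {a b}, G.Adj a b → c a = c b → c a ≠ c' a ∨ c b ≠ c' b := by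
    intro a b hab hcab
    by_contra! hfix
    exact hc' hab (by rw [← hfix.1, ← hfix.2, hcab])
  obtain ⟨p, hp, hpc⟩ : ∃ p, (u = p ∨ w = p) ∧ c p ≠ c' p := by
    rcases recolored_of_adj huw hcuw with h | h
    exacts [⟨u, .inl rfl, h⟩, ⟨w, .inr rfl, h⟩]
  obtain ⟨q, hq, hqc⟩ : ∃ q, (v = q ∨ x = q) ∧ c q ≠ c' q := by
    rcases recolored_of_adj hvx hcvx with h | h
    exacts [⟨v, .inl rfl, h⟩, ⟨x, .inr rfl, h⟩]
  have hcp : c p = c u := by rcases hp with rfl | rfl <;> simp [hcuw]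
  have hcq : c q = c v := by rcases hq with rfl | rfl <;> simp [hcvx]
  have hpq : p ≠ q := fun h => hcuv (by rw [← hcp, h, hcq])
  have hrecolored : ∀ z, c z ≠ c' z → z = p ∨ z = q := by
    intro z hz
    by_contra! hzpq
    refine hlt.not_ge (two_lt_card.mpr ⟨p, ?_, q, ?_, z, ?_, hpq, hzpq.1.symm, hzpq.2.symm⟩) <;>
      simpa
  have hfixed : ∀ z, z ≠ p → z ≠ q → c' z = c z := fun z hzp hzq =>
    (not_not.mp fun hz => (hrecolored z hz).elim hzp hzq).symm
  have hc'q : c' q = c p := hcc'.apply_eq_of_recolored_subset_pair hrecolored hpc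
  have hc'p : c' p = c q := (hcc'.symm.apply_eq_of_recolored_subset_pair
    (fun z hz => hrecolored z (Ne.symm hz)) hpc.symm).symm
  rcases hq with rfl | rfl
  · -- `v` takes the color of `p`, which the other vertex of `{u, w}` keeps
    obtain ⟨r, hvr, hrp, hcr⟩ : ∃ r, G.Adj v r ∧ r ≠ p ∧ c r = c u := by
      rcases hp with rfl | rfl
      exacts [⟨w, hvw, huw.ne', hcuw.symm⟩, ⟨u, huv.symm, huw.ne, rfl⟩]
    exact hc' hvr (by rw [hc'q, hfixed r hrp hvr.ne', hcp, hcr])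
  · -- `p` takes the color of `x`, which `v` keeps
    have hpv : G.Adj p v := by rcases hp with rfl | rfl; exacts [huv, hvw.symm]
    exact hc' hpv (by rw [hc'p, hfixed v hpv.ne' hvx.ne, hcq])

theorem exists_perm_comp_eq_on_pairs (f : α → ℕ) {k₁ k₂ : ℕ} (hk : k₁ ≠ k₂)
    (hk₁ : 2 ≤ #{x | f x = k₁}) (hk₂ : 2 ≤ #{x | f x = k₂}) {a₁ a₂ b₁ b₂ : α}
    (hab : Function.Injective ![a₁, a₂, b₁, b₂]) :
    ∃ σ : Equiv.Perm α, f (σ a₁) = k₁ ∧ f (σ a₂) = k₁ ∧ f (σ b₁) = k₂ ∧ f (σ b₂) = k₂ := by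
  obtain ⟨p₁, hp₁, p₂, hp₂, hp⟩ := one_lt_card.mp hk₁
  obtain ⟨q₁, hq₁, q₂, hq₂, hq⟩ := one_lt_card.mp hk₂
  simp only [mem_filter, mem_univ, true_and] at hp₁ hp₂ hq₁ hq₂
  have hpq : ∀ {p q}, f p = k₁ → f q = k₂ → p ≠ q := fun hp hq h => hk (hp ▸ h ▸ hq)
  obtain ⟨σ, hσ⟩ := Equiv.Perm.exists_extending_pair _ _ hab
    (vec4_injective hp (hpq hp₁ hq₁) (hpq hp₁ hq₂) (hpq hp₂ hq₁) (hpq hp₂ hq₂) hq)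
  exact ⟨σ, (congrArg f (hσ 0)).trans hp₁, (congrArg f (hσ 1)).trans hp₂,
    (congrArg f (hσ 2)).trans hq₁, (congrArg f (hσ 3)).trans hq₂⟩

theorem le_colVillainy {G : SimpleGraph α} {c : α → ℕ} {n : ℕ}
    (hex : ∃ c', IsProperColoring G c' ∧ SameColorCounts c c')
    (h : ∀ c', IsProperColoring G c' → SameColorCounts c c' → n ≤ recolorCount c c') :
    n ≤ colVillainy G c := by
  obtain ⟨c', hc', hcc'⟩ := hex
  refine le_csInf ⟨_, c', hc', hcc', rfl⟩ ?_
  rintro _ ⟨c', hc', hcc', rfl⟩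
  exact h c' hc' hcc'

theorem colVillainy_le_recolorCount {G : SimpleGraph α} {c c' : α → ℕ}
    (hc' : IsProperColoring G c') (hcc' : SameColorCounts c c') :
    colVillainy G c ≤ recolorCount c c' :=
  Nat.sInf_le ⟨c', hc', hcc', rfl⟩

theorem colVillainy_comp_perm_le_villainy {G : SimpleGraph α} {f : α → ℕ}
    (hf : IsOptimalColoring G f) (σ : Equiv.Perm α) : colVillainy G (f ∘ σ) ≤ villainy G := by
  refine le_csSup ⟨Fintype.card α, ?_⟩ ⟨f, f ∘ σ, hf, ⟨σ, rfl⟩, rfl⟩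
  rintro _ ⟨f', _, hf', ⟨σ', rfl⟩, rfl⟩
  exact (colVillainy_le_recolorCount hf'.1 (sameColorCounts_comp_perm f' σ')).trans
    (card_filter_le _ _)

end

theorem villainy_ge_three_of_triangle_deg_three (G : SimpleGraph V)
    [DecidableRel G.Adj] (u v w : V)
    (huv : G.Adj u v) (hvw : G.Adj v w) (huw : G.Adj u w)
    (hdeg : 3 ≤ G.degree v)
    (f : V → ℕ) (hf : IsOptimalColoring G f) (k₁ k₂ : ℕ) (hkk : k₁ ≠ k₂)
    (hk₁ : 2 ≤ (univ.filter fun x => f x = k₁).card)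
    (hk₂ : 2 ≤ (univ.filter fun x => f x = k₂).card) :
    3 ≤ villainy G := by
  obtain ⟨x, hvx, hxu, hxw⟩ := G.exists_adj_ne_ne_of_three_le_degree hdeg u w
  obtain ⟨σ, hu, hw, hv, hx⟩ := exists_perm_comp_eq_on_pairs f hkk hk₁ hk₂
    (vec4_injective huw.ne huv.ne hxu.symm hvw.ne' hxw.symm hvx.ne)
  refine (le_colVillainy ⟨f, hf.1, sameColorCounts_comp_perm f σ⟩ fun c' hc' hcc' => ?_).trans
    (colVillainy_comp_perm_le_villainy hf σ)
  exact three_le_recolorCount_of_triangle hc' hcc' huv hvw huw hvx (hu.trans hw.symm)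
    (hv.trans hx.symm) (hu.trans_ne (hkk.trans_eq hv.symm))
end

section
/- If G is a graph of order at least 7 with χ(G) = 3, then B(G) ≥ 3. -/
open Finset

variable {V : Type*}

variable [Fintype V] [DecidableEq V]

/-!
A proper coloring with the same color counts as `c` that differs from `c` in at most two
vertices is `c` itself or `c` with the colors of two differently colored vertices exchanged,
since changing one vertex alters the counts. Hence `B(c) ≥ 3` as soon as `c` is improper and no
two differently colored vertices meet all monochromatic edges, e.g. when `c` makes monochromatic
a triangle, two disjoint edges in one color, or three disjoint edges. Permuting an optimal
3-coloring achieves this once its color classes are large enough: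
* with a triangle, some class has three of the at least seven vertices;
* without a triangle there are two disjoint edges `pq`, `rs`. If there are no three disjoint
  edges, every edge meets `{x, r, s}` for `x = p` or `x = q`, and the at least four remaining
  vertices can share a color;
* if there are three disjoint edges and all classes have at most three vertices, a class with a
  single vertex `w` can absorb a non-neighbour of `w`, after which every class has two vertices.
-/

section Coloring

variable {α : Type*} {G : SimpleGraph α} {f : α → ℕ} {n : ℕ}

theorem IsProperColoring.colorable (hf : IsProperColoring G f) (hlt : ∀ v, f v < n) :
    G.Colorable n :=
  ⟨.mk (fun v => ⟨f v, hlt v⟩) fun huv e => hf huv (congrArg Fin.val e)⟩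

theorem SimpleGraph.Colorable.exists_isProperColoring (h : G.Colorable n) :
    ∃ f, IsProperColoring G f ∧ ∀ v, f v < n := by
  obtain ⟨C⟩ := h
  exact ⟨fun v => C v, fun _ _ huv e => C.valid huv (Fin.ext e), fun v => (C v).isLt⟩

theorem IsProperColoring.update [DecidableEq α] (hf : IsProperColoring G f) {x : α} {k : ℕ}
    (hk : ∀ y, G.Adj x y → f y ≠ k) : IsProperColoring G (Function.update f x k) := by
  intro u v huv
  rcases eq_or_ne u x with rfl | hu
  · simpa [huv.ne'] using (hk v huv).symm
  rcases eq_or_ne v x with rfl | hv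
  · simpa [hu] using hk u huv.symm
  simpa [hu, hv] using hf huv

theorem colorable_chromNum [Finite α] : G.Colorable (chromNum G) :=
  G.colorable_chromaticNumber_of_fintype

theorem not_colorable_of_lt_chromNum (hn : n < chromNum G) : ¬ G.Colorable n := fun h =>
  (ENat.toNat_le_of_le_natCast h.chromaticNumber_le).not_gt hn

theorem isOptimalColoring_of_lt_chromNum [Fintype α] (hf : IsProperColoring G f)
    (hlt : ∀ v, f v < chromNum G) : IsOptimalColoring G f := by
  refine ⟨hf, le_antisymm ?_ ?_⟩
  · simpa using card_le_card (s := univ.image f) (t := range (chromNum G))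
      (by simpa [subset_iff] using hlt)
  · by_contra! h
    let C : G.Coloring (univ.image f) := .mk (fun v => ⟨f v, mem_image_of_mem f (mem_univ v)⟩)
      fun huv e => hf huv (congrArg Subtype.val e)
    exact not_colorable_of_lt_chromNum h (by simpa using C.colorable)

theorem colorable_two_of_isVertexCover_singleton {w : α} (hw : G.IsVertexCover {w}) :
    G.Colorable 2 := by
  classical
  refine IsProperColoring.colorable (f := fun v => if v = w then 0 else 1) (fun u v huv => ?_)
    (fun v => by split <;> omega)
  rcases hw huv with rfl | rfl <;> simp_all [huv.ne, huv.ne']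

end Coloring

/-- Exchanging the colors of two vertices cannot turn `c` into a proper coloring, since the
monochromatic edges missing both vertices stay monochromatic. -/
def SwapRobust {α : Type*} (G : SimpleGraph α) (c : α → ℕ) : Prop :=
  ∀ u w, (∀ a b, G.Adj a b → c a = c b → a = u ∨ a = w ∨ b = u ∨ b = w) → c u = c w

section Recoloring

variable {α : Type*} [Fintype α]

theorem SameColorCounts.exists_ne_of_ne {c c' : α → ℕ} (h : SameColorCounts c c') {v : α}
    (hv : c v ≠ c' v) : ∃ u, c u ≠ c' u ∧ c u ≠ c v := by
  by_contra! hall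
  have hssub : univ.filter (c' · = c v) ⊂ univ.filter (c · = c v) := by
    refine ⟨fun x hx => ?_, fun hsup => hv ?_⟩
    · simp only [mem_filter, mem_univ, true_and] at hx ⊢
      by_cases hx' : c x = c' x
      · rwa [hx']
      · exact hall x hx'
    · have hv' : v ∈ univ.filter (c' · = c v) := hsup (by simp)
      exact (by simpa using hv' : c' v = c v).symm
  exact (card_lt_card hssub).ne (h (c v)).symm

variable [DecidableEq α] {G : SimpleGraph α}

theorem three_le_recolorCount {c c' : α → ℕ} (hc : ¬ IsProperColoring G c)
    (hrob : SwapRobust G c) (hc' : IsProperColoring G c') (hcnt : SameColorCounts c c') :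
    3 ≤ recolorCount c c' := by
  by_contra! hlt
  by_cases hall : ∀ v, c v = c' v
  · exact hc (funext hall ▸ hc')
  push Not at hall
  obtain ⟨v, hv⟩ := hall
  obtain ⟨u, hu, huv⟩ := hcnt.exists_ne_of_ne hv
  have hD : univ.filter (fun x => c x ≠ c' x) = {u, v} := by
    refine (eq_of_subset_of_card_le (fun x hx => ?_) ?_).symm
    · rcases mem_insert.mp hx with rfl | hx
      · simpa using hu
      · simpa [mem_singleton.mp hx] using hv
    · rw [card_pair (fun h => huv (congrArg c h))]
      exact Nat.le_of_lt_succ hlt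
  have hagree : ∀ x, x ≠ u → x ≠ v → c x = c' x := fun x hxu hxv => by
    by_contra hx
    have : x ∈ univ.filter (fun x => c x ≠ c' x) := by simpa using hx
    simp [hD, hxu, hxv] at this
  refine huv (hrob u v fun a b hab hcab => ?_)
  by_contra! h
  exact hc' hab (by rw [← hagree a h.1 h.2.1, ← hagree b h.2.2.1 h.2.2.2, hcab])

theorem three_le_villainy_of_swapRobust {f : α → ℕ} (hf : IsOptimalColoring G f)
    (σ : Equiv.Perm α) (hc : ¬ IsProperColoring G (f ∘ σ)) (hrob : SwapRobust G (f ∘ σ)) :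
    3 ≤ villainy G := by
  have h3 : 3 ≤ colVillainy G (f ∘ σ) :=
    le_csInf ⟨_, f, hf.1, sameColorCounts_comp_perm f σ, rfl⟩ fun _ ⟨_, hc', hcnt, hn⟩ =>
      hn ▸ three_le_recolorCount hc hrob hc' hcnt
  refine h3.trans (le_csSup ⟨Fintype.card α, ?_⟩ ⟨f, f ∘ σ, hf, ⟨σ, rfl⟩, rfl⟩)
  rintro _ ⟨g, _, hg, ⟨τ, rfl⟩, rfl⟩
  have : colVillainy G (g ∘ τ) ≤ recolorCount (g ∘ τ) g :=
    Nat.sInf_le ⟨g, hg.1, sameColorCounts_comp_perm g τ, rfl⟩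
  exact this.trans (card_filter_le univ _)

end Recoloring

section Painting

variable {α : Type*}

theorem exists_perm_mapsTo_of_card_le [DecidableEq α] {S T : Finset α} (h : #S ≤ #T) :
    ∃ σ : Equiv.Perm α, ∀ v ∈ S, σ v ∈ T := by
  obtain ⟨T', hT'T, hT'⟩ := exists_subset_card_eq h
  obtain ⟨σ, hσ⟩ := Equiv.Perm.exists_map_finset_eq S T' hT'.symm
  exact ⟨σ, fun v hv => hT'T (hσ ▸ mem_map_of_mem _ hv)⟩

theorem exists_perm_map_eq {l t : List α} (hl : l.Nodup) (ht : t.Nodup)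
    (hlen : l.length = t.length) : ∃ σ : Equiv.Perm α, l.map σ = t := by
  obtain ⟨σ, hσ⟩ := Equiv.Perm.exists_extending_pair l.get (t.get ∘ Fin.cast hlen)
    (List.nodup_iff_injective_get.mp hl)
    ((List.nodup_iff_injective_get.mp ht).comp (Fin.cast_injective hlen))
  exact ⟨σ, List.ext_get (by simp [hlen]) fun i h₁ _ => by simpa using hσ ⟨i, by simpa using h₁⟩⟩

end Painting

section Patterns

variable {α : Type*} {G : SimpleGraph α} {c : α → ℕ}

theorem swapRobust_of_triangle {p q r : α} (hpq : G.Adj p q) (hpr : G.Adj p r)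
    (hqr : G.Adj q r) (hp : c p = c q) (hq : c q = c r) : SwapRobust G c := by
  intro u w H
  have := H p q hpq hp
  have := H p r hpr (hp.trans hq)
  have := H q r hqr hq
  have := hpq.ne; have := hpr.ne; have := hqr.ne
  grind

theorem swapRobust_of_disjoint_edges {p q r s : α} (hpq : G.Adj p q) (hrs : G.Adj r s)
    (hd : [p, q, r, s].Nodup) (hp : c p = c q) (hq : c q = c r) (hr : c r = c s) :
    SwapRobust G c := by
  intro u w H
  have := H p q hpq hp
  have := H r s hrs hr
  simp only [List.nodup_cons, List.mem_cons, List.not_mem_nil] at hd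
  grind

theorem swapRobust_of_three_disjoint_edges {a₁ b₁ a₂ b₂ a₃ b₃ : α} (h₁ : G.Adj a₁ b₁)
    (h₂ : G.Adj a₂ b₂) (h₃ : G.Adj a₃ b₃) (hd : [a₁, b₁, a₂, b₂, a₃, b₃].Nodup)
    (hc₁ : c a₁ = c b₁) (hc₂ : c a₂ = c b₂) (hc₃ : c a₃ = c b₃) : SwapRobust G c := by
  intro u w H
  have := H a₁ b₁ h₁ hc₁
  have := H a₂ b₂ h₂ hc₂
  have := H a₃ b₃ h₃ hc₃
  simp only [List.nodup_cons, List.mem_cons, List.not_mem_nil] at hd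
  grind

end Patterns

section Realization

variable {α : Type*} [Fintype α] [DecidableEq α] {G : SimpleGraph α} {f : α → ℕ} {κ : ℕ}

theorem three_le_villainy_of_triangle (hf : IsOptimalColoring G f)
    (hκ : 3 ≤ #(univ.filter (f · = κ))) {p q r : α} (hpq : G.Adj p q) (hpr : G.Adj p r)
    (hqr : G.Adj q r) : 3 ≤ villainy G := by
  obtain ⟨σ, hσ⟩ := exists_perm_mapsTo_of_card_le (S := {p, q, r}) (card_le_three.trans hκ)
  simp only [mem_insert, mem_singleton, mem_filter, mem_univ, true_and, forall_eq_or_imp,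
    forall_eq] at hσ
  refine three_le_villainy_of_swapRobust hf σ (fun h => h hpq ?_)
    (swapRobust_of_triangle hpq hpr hqr ?_ ?_) <;>
    simp [hσ]

theorem three_le_villainy_of_disjoint_edges (hf : IsOptimalColoring G f)
    (hκ : 4 ≤ #(univ.filter (f · = κ))) {p q r s : α} (hpq : G.Adj p q) (hrs : G.Adj r s)
    (hd : [p, q, r, s].Nodup) : 3 ≤ villainy G := by
  obtain ⟨σ, hσ⟩ := exists_perm_mapsTo_of_card_le (S := {p, q, r, s}) (card_le_four.trans hκ)
  simp only [mem_insert, mem_singleton, mem_filter, mem_univ, true_and, forall_eq_or_imp,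
    forall_eq] at hσ
  refine three_le_villainy_of_swapRobust hf σ (fun h => h hpq ?_)
    (swapRobust_of_disjoint_edges hpq hrs hd ?_ ?_ ?_) <;> simp [hσ]

theorem three_le_villainy_of_three_disjoint_edges (hf : IsOptimalColoring G f)
    (hfib : ∀ k < 3, 2 ≤ #(univ.filter (f · = k))) {a₁ b₁ a₂ b₂ a₃ b₃ : α} (h₁ : G.Adj a₁ b₁)
    (h₂ : G.Adj a₂ b₂) (h₃ : G.Adj a₃ b₃) (hd : [a₁, b₁, a₂, b₂, a₃, b₃].Nodup) :
    3 ≤ villainy G := by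
  have hpair : ∀ k < 3, ∃ x y, x ≠ y ∧ f x = k ∧ f y = k := fun k hk => by
    obtain ⟨x, hx, y, hy, hxy⟩ := one_lt_card.mp (hfib k hk)
    exact ⟨x, y, hxy, (mem_filter.mp hx).2, (mem_filter.mp hy).2⟩
  obtain ⟨x₁, y₁, hxy₁, hx₁, hy₁⟩ := hpair 0 (by norm_num)
  obtain ⟨x₂, y₂, hxy₂, hx₂, hy₂⟩ := hpair 1 (by norm_num)
  obtain ⟨x₃, y₃, hxy₃, hx₃, hy₃⟩ := hpair 2 (by norm_num)
  have ht : [x₁, y₁, x₂, y₂, x₃, y₃].Nodup := by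
    simp only [List.nodup_cons, List.mem_cons, List.not_mem_nil, List.nodup_nil, or_false,
      not_or, and_true]
    and_intros <;> intro h <;> simp_all
  obtain ⟨σ, hσ⟩ := exists_perm_map_eq hd ht rfl
  simp only [List.map_cons, List.map_nil, List.cons.injEq] at hσ
  refine three_le_villainy_of_swapRobust hf σ (fun h => h h₁ ?_)
    (swapRobust_of_three_disjoint_edges h₁ h₂ h₃ hd ?_ ?_ ?_) <;> simp [*]

end Realization

def HasThreeDisjointEdges {α : Type*} (G : SimpleGraph α) : Prop :=
  ∃ a₁ b₁ a₂ b₂ a₃ b₃, G.Adj a₁ b₁ ∧ G.Adj a₂ b₂ ∧ G.Adj a₃ b₃ ∧ [a₁, b₁, a₂, b₂, a₃, b₃].Nodup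

section TriangleFree

variable {α : Type*} [DecidableEq α] {G : SimpleGraph α}

theorem exists_ne_not_adj (hfree : G.CliqueFree 3) (hnot2 : ¬ G.Colorable 2) (w : α) :
    ∃ x, x ≠ w ∧ ¬ G.Adj w x := by
  by_contra! h
  refine hnot2 (colorable_two_of_isVertexCover_singleton (w := w) fun u v huv => ?_)
  by_contra! huvw
  simp only [Set.mem_singleton_iff] at huvw
  exact hfree {w, u, v} (SimpleGraph.is3Clique_triple_iff.mpr ⟨h u huvw.1, h v huvw.2, huv⟩)

theorem exists_two_disjoint_edges (hfree : G.CliqueFree 3) (hnot2 : ¬ G.Colorable 2) :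
    ∃ p q r s, G.Adj p q ∧ G.Adj r s ∧ [p, q, r, s].Nodup := by
  have hmiss : ∀ x, ∃ u v, G.Adj u v ∧ u ≠ x ∧ v ≠ x := fun x => by
    by_contra! h
    refine hnot2 (colorable_two_of_isVertexCover_singleton (w := x) fun u v huv => ?_)
    by_contra! hx
    simp only [Set.mem_singleton_iff] at hx
    exact hx.2 (h u v huv hx.1)
  have htri : ∀ x y z, G.Adj x y → G.Adj x z → G.Adj y z → False := fun x y z hxy hxz hyz =>
    hfree {x, y, z} (SimpleGraph.is3Clique_triple_iff.mpr ⟨hxy, hxz, hyz⟩)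
  by_contra! H
  have hnodup : ∀ p q r s, G.Adj p q → G.Adj r s → p ≠ r → p ≠ s → q ≠ r → q ≠ s → False :=
    fun p q r s hpq hrs hpr hps hqr hqs =>
      H p q r s hpq hrs (by simp [hpq.ne, hrs.ne, hpr, hps, hqr, hqs])
  have hthrough : ∀ x y u v, G.Adj x y → G.Adj u v → u ≠ x → v ≠ x →
      ∃ z, G.Adj y z ∧ z ≠ x := by
    intro x y u v hxy huv hux hvx
    by_cases hyu : y = u
    · exact ⟨v, hyu ▸ huv, hvx⟩
    by_cases hyv : y = v
    · exact ⟨u, hyv ▸ huv.symm, hux⟩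
    exact (hnodup x y u v hxy huv hux.symm hvx.symm hyu hyv).elim
  obtain ⟨a, b, hab⟩ : ∃ a b, G.Adj a b := by
    by_contra! h
    exact hnot2 (IsProperColoring.colorable (f := 0) (fun u v huv => (h u v huv).elim) (by simp))
  obtain ⟨c, d, hcd, hca, hda⟩ := hmiss a
  obtain ⟨e, f, hef, heb, hfb⟩ := hmiss b
  obtain ⟨x, hbx, hxa⟩ := hthrough a b c d hab hcd hca hda
  obtain ⟨y, hay, hyb⟩ := hthrough b a e f hab.symm hef heb hfb
  by_cases hxy : x = y
  · exact htri a b x hab (hxy ▸ hay) hbx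
  · exact hnodup b x a y hbx hay hab.ne' hyb.symm hxa hxy

theorem exists_adj_not_mem_of_not_isVertexCover (h3 : ¬ HasThreeDisjointEdges G) {p q r s : α}
    (hpq : G.Adj p q) (hrs : G.Adj r s) (hd : [p, q, r, s].Nodup)
    (hcov : ¬ G.IsVertexCover {p, r, s}) : ∃ t, G.Adj q t ∧ t ∉ [p, q, r, s] := by
  simp only [SimpleGraph.IsVertexCover, Set.mem_insert_iff, Set.mem_singleton_iff] at hcov
  push Not at hcov
  obtain ⟨u, v, huv, hu, hv⟩ := hcov
  have := huv.ne
  by_cases hqu : q = u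
  · exact ⟨v, hqu ▸ huv, by grind⟩
  by_cases hqv : q = v
  · exact ⟨u, hqv ▸ huv.symm, by grind⟩
  refine (h3 ⟨u, v, p, q, r, s, huv, hpq, hrs, ?_⟩).elim
  simp only [List.nodup_cons, List.mem_cons, List.not_mem_nil] at hd ⊢
  grind

theorem exists_isVertexCover_of_not_hasThreeDisjointEdges (hfree : G.CliqueFree 3)
    (h3 : ¬ HasThreeDisjointEdges G) {p q r s : α} (hpq : G.Adj p q) (hrs : G.Adj r s)
    (hd : [p, q, r, s].Nodup) : ∃ x, G.IsVertexCover {x, r, s} := by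
  by_contra! hcov
  obtain ⟨t, hqt, ht⟩ := exists_adj_not_mem_of_not_isVertexCover h3 hpq hrs hd (hcov p)
  obtain ⟨t', hpt', ht'⟩ := exists_adj_not_mem_of_not_isVertexCover h3 hpq.symm hrs
    (by simp only [List.nodup_cons, List.mem_cons, List.not_mem_nil] at hd ⊢; grind) (hcov q)
  by_cases htt' : t = t'
  · subst htt'
    exact hfree {p, q, t} (SimpleGraph.is3Clique_triple_iff.mpr ⟨hpq, hpt', hqt⟩)
  refine h3 ⟨p, t', q, t, r, s, hpt', hqt, hrs, ?_⟩
  simp only [List.nodup_cons, List.mem_cons, List.not_mem_nil] at hd ht ht' ⊢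
  grind

theorem exists_isProperColoring_of_isVertexCover {x y z : α} (hcov : G.IsVertexCover {x, y, z})
    (hxy : ¬ G.Adj x y) : ∃ f, IsProperColoring G f ∧ (∀ v, f v < 3) ∧
      ∀ v, v ≠ x → v ≠ y → v ≠ z → f v = 0 := by
  refine ⟨fun v => if v = z then 2 else if v = x ∨ v = y then 1 else 0, fun u v huv => ?_,
    fun v => by dsimp only; split_ifs <;> omega, fun v hx hy hz => by simp [hx, hy, hz]⟩
  have hmem := hcov huv
  have := huv.ne
  have hyx : ¬ G.Adj y x := fun h => hxy h.symm
  simp only [Set.mem_insert_iff, Set.mem_singleton_iff] at hmem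
  dsimp only
  split_ifs <;> grind

end TriangleFree

section Fibers

variable {α : Type*} [Fintype α] {f : α → ℕ}

theorem card_eq_card_fiber_add_of_lt_three (hlt : ∀ v, f v < 3) :
    Fintype.card α =
      #(univ.filter (f · = 0)) + #(univ.filter (f · = 1)) + #(univ.filter (f · = 2)) := by
  rw [← card_univ, card_eq_sum_card_fiberwise (t := range 3) (fun v _ => by simpa using hlt v)]
  simp [sum_range_succ]

variable [DecidableEq α] {G : SimpleGraph α}

theorem three_le_villainy_of_not_cliqueFree (hn : 7 ≤ Fintype.card α)
    (hf : IsOptimalColoring G f) (hlt : ∀ v, f v < 3) (htri : ¬ G.CliqueFree 3) :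
    3 ≤ villainy G := by
  obtain ⟨_, hclique⟩ := not_forall.mp htri
  obtain ⟨p, q, r, hpq, hpr, hqr, -⟩ := SimpleGraph.is3Clique_iff.mp (not_not.mp hclique)
  obtain ⟨κ, hκ⟩ : ∃ κ, 3 ≤ #(univ.filter (f · = κ)) := by
    by_contra! h
    have := card_eq_card_fiber_add_of_lt_three hlt
    have := h 0; have := h 1; have := h 2
    omega
  exact three_le_villainy_of_triangle hf hκ hpq hpr hqr

theorem card_sub_card_le_card_fiber {k : ℕ} (S : Finset α) (h : ∀ v ∉ S, f v = k) :
    Fintype.card α - #S ≤ #(univ.filter (f · = k)) := by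
  rw [← card_compl]
  exact card_le_card fun v hv => by simpa using h v (by simpa using hv)

theorem exists_isProperColoring_four_le_card_fiber (hfree : G.CliqueFree 3)
    (hn : 7 ≤ Fintype.card α) (h3 : ¬ HasThreeDisjointEdges G) {p q r s : α}
    (hpq : G.Adj p q) (hrs : G.Adj r s) (hd : [p, q, r, s].Nodup) :
    ∃ f, IsProperColoring G f ∧ (∀ v, f v < 3) ∧ 4 ≤ #(univ.filter (f · = 0)) := by
  obtain ⟨x, hx⟩ := exists_isVertexCover_of_not_hasThreeDisjointEdges hfree h3 hpq hrs hd
  obtain ⟨f, hf, hlt, hzero⟩ : ∃ f, IsProperColoring G f ∧ (∀ v, f v < 3) ∧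
      ∀ v ∉ ({x, r, s} : Finset α), f v = 0 := by
    by_cases hxr : G.Adj x r
    · have hxs : ¬ G.Adj x s := fun hxs =>
        hfree {x, r, s} (SimpleGraph.is3Clique_triple_iff.mpr ⟨hxr, hxs, hrs⟩)
      obtain ⟨f, hf, hlt, hzero⟩ :=
        exists_isProperColoring_of_isVertexCover (z := r) (by rwa [Set.pair_comm]) hxs
      refine ⟨f, hf, hlt, fun v hv => ?_⟩
      simp only [mem_insert, mem_singleton, not_or] at hv
      exact hzero v hv.1 hv.2.2 hv.2.1
    · obtain ⟨f, hf, hlt, hzero⟩ := exists_isProperColoring_of_isVertexCover hx hxr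
      refine ⟨f, hf, hlt, fun v hv => ?_⟩
      simp only [mem_insert, mem_singleton, not_or] at hv
      exact hzero v hv.1 hv.2.1 hv.2.2
  have := card_le_three (a := x) (b := r) (c := s)
  exact ⟨f, hf, hlt, by have := card_sub_card_le_card_fiber _ hzero; omega⟩

theorem exists_isProperColoring_two_le_card_fiber (hfree : G.CliqueFree 3)
    (hnot2 : ¬ G.Colorable 2) (hn : 7 ≤ Fintype.card α) (hf : IsProperColoring G f)
    (hlt : ∀ v, f v < 3) (hsmall : ∀ k, #(univ.filter (f · = k)) < 4) :
    ∃ g, IsProperColoring G g ∧ (∀ v, g v < 3) ∧ ∀ k < 3, 2 ≤ #(univ.filter (g · = k)) := by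
  by_cases hbal : ∀ k < 3, 2 ≤ #(univ.filter (f · = k))
  · exact ⟨f, hf, hlt, hbal⟩
  push Not at hbal
  obtain ⟨k, hk, hk2⟩ := hbal
  have hsizes : #(univ.filter (f · = k)) = 1 ∧
      ∀ j < 3, j ≠ k → 3 ≤ #(univ.filter (f · = j)) := by
    have := card_eq_card_fiber_add_of_lt_three hlt
    have := hsmall 0; have := hsmall 1; have := hsmall 2
    interval_cases k <;> refine ⟨by omega, fun j hj hjk => ?_⟩ <;> interval_cases j <;> omega
  obtain ⟨w, hw⟩ := card_eq_one.mp hsizes.1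
  obtain ⟨x, hxw, hwx⟩ := exists_ne_not_adj hfree hnot2 w
  refine ⟨Function.update f x k, hf.update fun y hxy hy => hwx ?_, fun v => ?_, fun j hj => ?_⟩
  · have hyw : y ∈ univ.filter (f · = k) := by simpa using hy
    rw [hw, mem_singleton] at hyw
    exact hyw ▸ hxy.symm
  · rcases eq_or_ne v x with rfl | hv
    · simpa using hk
    · simpa [hv] using hlt v
  rcases eq_or_ne j k with rfl | hjk
  · have hwmem : w ∈ univ.filter (f · = j) := by simp [hw]
    refine (card_pair hxw.symm).symm.le.trans (card_le_card fun v hv => ?_)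
    rcases mem_insert.mp hv with rfl | hv
    · simpa [hxw.symm] using hwmem
    · simp [mem_singleton.mp hv]
  · have hsub : (univ.filter (f · = j)).erase x ⊆ univ.filter (Function.update f x k · = j) :=
      fun v hv => by
        have hvx := ne_of_mem_erase hv
        simpa [hvx] using mem_of_mem_erase hv
    have := (pred_card_le_card_erase).trans (card_le_card hsub)
    have := hsizes.2 j hj hjk
    omega

end Fibers

theorem villainy_ge_three_of_order_seven (G : SimpleGraph V)
    (hn : 7 ≤ Fintype.card V) (hchi : chromNum G = 3) :
    3 ≤ villainy G := by
  have hopt : ∀ f, IsProperColoring G f → (∀ v, f v < 3) → IsOptimalColoring G f :=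
    fun f hf hlt => isOptimalColoring_of_lt_chromNum hf (hchi ▸ hlt)
  have hnot2 : ¬ G.Colorable 2 := not_colorable_of_lt_chromNum (by omega)
  obtain ⟨f, hf, hlt⟩ := (hchi ▸ colorable_chromNum (G := G)).exists_isProperColoring
  by_cases hfree : G.CliqueFree 3
  case neg => exact three_le_villainy_of_not_cliqueFree hn (hopt f hf hlt) hlt hfree
  obtain ⟨p, q, r, s, hpq, hrs, hd⟩ := exists_two_disjoint_edges hfree hnot2
  by_cases hbig : ∃ κ, 4 ≤ #(univ.filter (f · = κ))
  · obtain ⟨κ, hκ⟩ := hbig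
    exact three_le_villainy_of_disjoint_edges (hopt f hf hlt) hκ hpq hrs hd
  push Not at hbig
  by_cases h3 : HasThreeDisjointEdges G
  · obtain ⟨a₁, b₁, a₂, b₂, a₃, b₃, h₁, h₂, h₃, hd₃⟩ := h3
    obtain ⟨g, hg, hglt, hfib⟩ :=
      exists_isProperColoring_two_le_card_fiber hfree hnot2 hn hf hlt hbig
    exact three_le_villainy_of_three_disjoint_edges (hopt g hg hglt) hfib h₁ h₂ h₃ hd₃
  · obtain ⟨g, hg, hglt, hg4⟩ := exists_isProperColoring_four_le_card_fiber hfree hn h3 hpq hrs hd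
    exact three_le_villainy_of_disjoint_edges (hopt g hg hglt) hg4 hpq hrs hd
end
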